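/- Let n ∈ ℕ and p ∈ [1, ∞). Define a norm on ℂⁿ by ‖ξ‖_{F^p} = ‖u·d(ξ)·u⁻¹‖_{B(ℓᵖ(Fin n))}, where u is the n×n Fourier matrix and d(ξ) the diagonal matrix of ξ. Then the cyclic forward shift τ : ℂⁿ → ℂⁿ, τ(ξ)_j = ξ_{j−1 mod n}, is an isometry for this norm: ‖τ(ξ)‖_{F^p} = ‖ξ‖_{F^p} for all ξ ∈ ℂⁿ. -/

import Mathlib

open Real
open scoped BigOperators

/-- The `ℓᵖ` norm on `ι → ℂ` for a real exponent `p`. -/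
noncomputable def pNorm {ι : Type*} [Fintype ι] (p : ℝ) (ξ : ι → ℂ) : ℝ :=
  (∑ i, ‖ξ i‖ ^ p) ^ (1 / p)

/-- The operator norm of a matrix acting on `ℓᵖ(ι)`. -/
noncomputable def opNormLp {ι : Type*} [Fintype ι] (p : ℝ) (M : Matrix ι ι ℂ) : ℝ :=
  sInf {c : ℝ | 0 ≤ c ∧ ∀ ξ : ι → ℂ, pNorm p (M.mulVec ξ) ≤ c * pNorm p ξ}

/-- The primitive `n`-th root of unity `ω = exp(2πi/n)`. -/
noncomputable def dftOmega (n : ℕ) : ℂ := Complex.exp (2 * π * Complex.I / n)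

/-- The `n × n` Fourier matrix, with entries `u_{jk} = ω^{jk} / √n`. -/
noncomputable def dftMatrix (n : ℕ) [NeZero n] : Matrix (ZMod n) (ZMod n) ℂ :=
  Matrix.of fun j k => dftOmega n ^ (j.val * k.val) / (Real.sqrt n : ℂ)

/-- The norm `‖ξ‖_{F^p(ℤ_n)} = ‖u·d(ξ)·u⁻¹‖_{B(ℓᵖ)}` on `ℂⁿ`. -/
noncomputable def FpNorm (n : ℕ) [NeZero n] (p : ℝ) (ξ : ZMod n → ℂ) : ℝ :=
  opNormLp p (dftMatrix n * Matrix.diagonal ξ * (dftMatrix n)⁻¹)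

/-! With `P` the permutation matrix of `j ↦ j - 1`, the shift is conjugation of diagonals,
`P · d(ξ) = d(τ ξ) · P`, and the Fourier matrix turns `P` into a diagonal unitary,
`u · P = d(ω^j) · u`. Hence `u d(τ ξ) u⁻¹ = d(ω^j) (u d(ξ) u⁻¹) d(ω^j)⁻¹`, and conjugating by
a diagonal unitary, an isometry of `ℓᵖ`, does not change the operator norm. -/

open Matrix

section Conjugation

variable {ι R : Type*} [Fintype ι] [DecidableEq ι]

lemma permMatrix_mul_diagonal [CommRing R] (σ : Equiv.Perm ι) (ξ : ι → R) :
    σ.permMatrix R * diagonal ξ = diagonal (ξ ∘ σ) * σ.permMatrix R := by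
  ext i j
  rw [PEquiv.toMatrix_toPEquiv_mul, PEquiv.mul_toMatrix_toPEquiv]
  simp [diagonal_apply, Equiv.eq_symm_apply]

lemma mul_mul_inv_eq_of_mul_eq_mul [CommRing R] {u P D X Y : Matrix ι ι R}
    (hP : IsUnit P.det) (hPX : P * X = Y * P) (huP : u * P = D * u) :
    u * Y * u⁻¹ = D * (u * X * u⁻¹) * D⁻¹ := by
  have hY : Y = P * X * P⁻¹ := by
    rw [hPX, Matrix.mul_assoc, mul_nonsing_inv _ hP, Matrix.mul_one]
  calc u * Y * u⁻¹ = u * P * X * (u * P)⁻¹ := by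
        rw [hY, Matrix.mul_inv_rev]; simp only [Matrix.mul_assoc]
    _ = D * (u * X * u⁻¹) * D⁻¹ := by
        rw [huP, Matrix.mul_inv_rev]; simp only [Matrix.mul_assoc]

end Conjugation

section OperatorNorm

variable {ι : Type*} [Fintype ι]

lemma pNorm_diagonal_mulVec [DecidableEq ι] (p : ℝ) {d : ι → ℂ} (hd : ∀ i, ‖d i‖ = 1)
    (ξ : ι → ℂ) :
    pNorm p (diagonal d *ᵥ ξ) = pNorm p ξ := by
  simp only [pNorm, mulVec_diagonal, norm_mul, hd, one_mul]

lemma pNorm_mul_mul_mulVec_le {p c : ℝ} {A M B : Matrix ι ι ℂ}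
    (hA : ∀ ξ, pNorm p (A *ᵥ ξ) = pNorm p ξ) (hB : ∀ ξ, pNorm p (B *ᵥ ξ) = pNorm p ξ)
    (hM : ∀ ξ, pNorm p (M *ᵥ ξ) ≤ c * pNorm p ξ) (ξ : ι → ℂ) :
    pNorm p ((A * M * B) *ᵥ ξ) ≤ c * pNorm p ξ := by
  rw [← mulVec_mulVec, ← mulVec_mulVec, hA, ← hB ξ]
  exact hM _

lemma opNormLp_mul_mul_inv [DecidableEq ι] {p : ℝ} {A : Matrix ι ι ℂ}
    (hA : ∀ ξ, pNorm p (A *ᵥ ξ) = pNorm p ξ) (hdet : IsUnit A.det) (M : Matrix ι ι ℂ) :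
    opNormLp p (A * M * A⁻¹) = opNormLp p M := by
  have hA' : ∀ ξ, pNorm p (A⁻¹ *ᵥ ξ) = pNorm p ξ := fun ξ => by
    rw [← hA, mulVec_mulVec, mul_nonsing_inv _ hdet, one_mulVec]
  have hM : M = A⁻¹ * (A * M * A⁻¹) * A := by
    simp only [← Matrix.mul_assoc, nonsing_inv_mul _ hdet, Matrix.one_mul]
    rw [Matrix.mul_assoc, nonsing_inv_mul _ hdet, Matrix.mul_one]
  unfold opNormLp
  congr 1
  ext c
  refine ⟨fun ⟨hc, h⟩ => ⟨hc, ?_⟩,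
    fun ⟨hc, h⟩ => ⟨hc, pNorm_mul_mul_mulVec_le hA hA' h⟩⟩
  rw [hM]
  exact pNorm_mul_mul_mulVec_le hA' hA h

lemma opNormLp_diagonal_mul_mul_inv [DecidableEq ι] (p : ℝ) {d : ι → ℂ}
    (hd : ∀ i, ‖d i‖ = 1) (M : Matrix ι ι ℂ) :
    opNormLp p (diagonal d * M * (diagonal d)⁻¹) = opNormLp p M := by
  refine opNormLp_mul_mul_inv (pNorm_diagonal_mulVec p hd) ?_ M
  rw [det_diagonal, isUnit_iff_ne_zero, Finset.prod_ne_zero_iff]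
  exact fun i _ => norm_ne_zero_iff.mp (by simp [hd])

end OperatorNorm

lemma isPrimitiveRoot_dftOmega (n : ℕ) [NeZero n] : IsPrimitiveRoot (dftOmega n) n :=
  Complex.isPrimitiveRoot_exp n (NeZero.ne n)

lemma dftMatrix_mul_permMatrix (n : ℕ) [NeZero n] :
    dftMatrix n * Equiv.Perm.permMatrix ℂ (Equiv.subRight 1 : Equiv.Perm (ZMod n)) =
      diagonal (fun j => dftOmega n ^ j.val) * dftMatrix n := by
  ext j k
  rw [PEquiv.mul_toMatrix_toPEquiv, diagonal_mul]
  simp only [submatrix_apply, id, Equiv.subRight_symm_apply, dftMatrix, of_apply, ← mul_div_assoc,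
    ← pow_add]
  congr 1
  refine pow_eq_pow_of_modEq ?_ (isPrimitiveRoot_dftOmega n).pow_eq_one
  rw [← ZMod.natCast_eq_natCast_iff]
  push_cast
  simp only [ZMod.natCast_val, ZMod.cast_id', id]
  ring

theorem stmt7_general (n : ℕ) [NeZero n] (p : ℝ) (ξ : ZMod n → ℂ) :
    FpNorm n p (fun j => ξ (j - 1)) = FpNorm n p ξ := by
  set σ : Equiv.Perm (ZMod n) := Equiv.subRight 1
  have hσ : IsUnit (σ.permMatrix ℂ).det := by simp
  have hω : ∀ j : ZMod n, ‖dftOmega n ^ j.val‖ = 1 := fun j => by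
    rw [norm_pow, (isPrimitiveRoot_dftOmega n).norm'_eq_one (NeZero.ne n), one_pow]
  unfold FpNorm
  rw [show (fun j => ξ (j - 1)) = ξ ∘ σ from rfl,
    mul_mul_inv_eq_of_mul_eq_mul hσ (permMatrix_mul_diagonal σ ξ) (dftMatrix_mul_permMatrix n)]
  exact opNormLp_diagonal_mul_mul_inv p hω _

/-- The cyclic forward shift `τ(ξ)_j = ξ_{j−1}` is an isometry for the norm
`‖·‖_{F^p(ℤ_n)}`. -/
theorem stmt7 (n : ℕ) [NeZero n] (p : ℝ) (hp : 1 ≤ p) (ξ : ZMod n → ℂ) :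
    FpNorm n p (fun j => ξ (j - 1)) = FpNorm n p ξ :=
  stmt7_general n p ξ
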